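/- Let Y ∈ K^n be a nonzero solution of τ(Y) = M·Y, and let p ∉ D be a prime. Suppose the exponent functions e₁ of cont(M) and e₋₁ of cont(M₋₁) have supports contained in [ℓ₁, m₁] and [ℓ₋₁, m₋₁] respectively. Then v_{τ^k(p)}(Y) = 0 for all k outside the interval [min(ℓ₁, ℓ₋₁ + 1), max(m₁ − 1, m₋₁)]. -/

import Mathlib

-- The valuation of `a ∈ A` at a prime `p` of a UFD `A`: the largest `j` with `p^j ∣ a`,
-- and `⊤` for `a = 0`.
open Classical in
noncomputable def valA {A : Type*} [CommRing A] (p a : A) : WithTop ℤ :=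
  if a = 0 then ⊤ else ((multiplicity p a : ℤ) : WithTop ℤ)

-- The valuation extended to the fraction field `K` of `A` by `v_p(a/b) = v_p(a) - v_p(b)`.
open Classical in
noncomputable def valK {A : Type*} [CommRing A] [IsDomain A] [UniqueFactorizationMonoid A]
    (K : Type*) [Field K] [Algebra A K] [IsFractionRing A K] (p : A) (x : K) : WithTop ℤ :=
  if x = 0 then ⊤
  else (((multiplicity p (IsFractionRing.num A x) : ℤ) -
         (multiplicity p ((IsFractionRing.den A x : A)) : ℤ) : ℤ) : WithTop ℤ)

-- `v_p` of a matrix: the minimum of the valuations of its entries.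
noncomputable def valMat {A : Type*} [CommRing A] [IsDomain A] [UniqueFactorizationMonoid A]
    (K : Type*) [Field K] [Algebra A K] [IsFractionRing A K] (p : A)
    {m n : ℕ} (M : Matrix (Fin m) (Fin n) K) : WithTop ℤ :=
  Finset.univ.inf fun ij : Fin m × Fin n => valK K p (M ij.1 ij.2)

-- `v_p` of a vector: the minimum of the valuations of its entries.
noncomputable def valVec {A : Type*} [CommRing A] [IsDomain A] [UniqueFactorizationMonoid A]
    (K : Type*) [Field K] [Algebra A K] [IsFractionRing A K] (p : A)
    {n : ℕ} (Y : Fin n → K) : WithTop ℤ :=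
  Finset.univ.inf fun i : Fin n => valK K p (Y i)

-- The set `D` of nonzero elements `a` with `τ^k(a)` an associate of `a` for some `k ≠ 0`.
def Dset {A : Type*} [CommRing A] (τ : A ≃+* A) : Set A :=
  {a : A | a ≠ 0 ∧ ∃ k : ℤ, k ≠ 0 ∧ Associated ((τ ^ k) a) a}

section Helpers
variable {A : Type*} [CommRing A] [IsDomain A] [UniqueFactorizationMonoid A]
    (K : Type*) [Field K] [Algebra A K] [IsFractionRing A K]

lemma valK_zero (q : A) : valK K q 0 = ⊤ := by simp [valK]

lemma valK_ne_top {q : A} {x : K} (hx : x ≠ 0) : valK K q x ≠ ⊤ := by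
  simp [valK, hx]

lemma valK_of_frac {q : A} (hq : Prime q) {a b : A} (ha : a ≠ 0) (hb : b ≠ 0) :
    valK K q (algebraMap A K a / algebraMap A K b) =
      (((multiplicity q a : ℤ) - (multiplicity q b : ℤ) : ℤ) : WithTop ℤ) := by
  have ha' : algebraMap A K a ≠ 0 := fun h => ha (IsFractionRing.injective A K (h.trans (map_zero _).symm))
  have hb' : algebraMap A K b ≠ 0 := fun h => hb (IsFractionRing.injective A K (h.trans (map_zero _).symm))
  set x := algebraMap A K a / algebraMap A K b with hxdef
  have hx : x ≠ 0 := div_ne_zero ha' hb'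
  have hnum : IsFractionRing.num A x ≠ 0 := fun h => hx (IsFractionRing.eq_zero_of_num_eq_zero h)
  have hden : (IsFractionRing.den A x : A) ≠ 0 := nonZeroDivisors.coe_ne_zero _
  have hden' : algebraMap A K (IsFractionRing.den A x : A) ≠ 0 :=
    fun h => hden (IsFractionRing.injective A K (h.trans (map_zero _).symm))
  have h1 : algebraMap A K (IsFractionRing.num A x) / algebraMap A K (IsFractionRing.den A x : A) = x :=
    IsFractionRing.mk'_num_den' A x
  rw [hxdef, div_eq_div_iff hden' hb'] at h1
  have hcross : IsFractionRing.num A x * b = a * (IsFractionRing.den A x : A) := by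
    apply IsFractionRing.injective A K
    rw [map_mul, map_mul]; exact h1
  have hfin1 : FiniteMultiplicity q (IsFractionRing.num A x * b) :=
    FiniteMultiplicity.of_prime_left hq (mul_ne_zero hnum hb)
  have hfin2 : FiniteMultiplicity q (a * (IsFractionRing.den A x : A)) :=
    FiniteMultiplicity.of_prime_left hq (mul_ne_zero ha hden)
  have key : multiplicity q (IsFractionRing.num A x) + multiplicity q b
      = multiplicity q a + multiplicity q (IsFractionRing.den A x : A) := by
    rw [← multiplicity_mul hq hfin1, hcross, multiplicity_mul hq hfin2]
  rw [valK, if_neg hx]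
  congr 1
  omega

lemma valK_mul {q : A} (hq : Prime q) {x y : K} (hx : x ≠ 0) (hy : y ≠ 0) :
    valK K q (x * y) = valK K q x + valK K q y := by
  have hnx : IsFractionRing.num A x ≠ 0 := fun h => hx (IsFractionRing.eq_zero_of_num_eq_zero h)
  have hdx : (IsFractionRing.den A x : A) ≠ 0 := nonZeroDivisors.coe_ne_zero _
  have hny : IsFractionRing.num A y ≠ 0 := fun h => hy (IsFractionRing.eq_zero_of_num_eq_zero h)
  have hdy : (IsFractionRing.den A y : A) ≠ 0 := nonZeroDivisors.coe_ne_zero _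
  have hxy : x * y = algebraMap A K (IsFractionRing.num A x * IsFractionRing.num A y) /
      algebraMap A K ((IsFractionRing.den A x : A) * (IsFractionRing.den A y : A)) := by
    rw [map_mul, map_mul, ← div_mul_div_comm, IsFractionRing.mk'_num_den',
      IsFractionRing.mk'_num_den']
  have e1 : valK K q x = (((multiplicity q (IsFractionRing.num A x) : ℤ) -
      (multiplicity q (IsFractionRing.den A x : A) : ℤ) : ℤ) : WithTop ℤ) := by
    rw [valK, if_neg hx]
  have e2 : valK K q y = (((multiplicity q (IsFractionRing.num A y) : ℤ) -
      (multiplicity q (IsFractionRing.den A y : A) : ℤ) : ℤ) : WithTop ℤ) := by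
    rw [valK, if_neg hy]
  rw [hxy, valK_of_frac K hq (mul_ne_zero hnx hny) (mul_ne_zero hdx hdy), e1, e2,
    multiplicity_mul hq (FiniteMultiplicity.of_prime_left hq (mul_ne_zero hnx hny)),
    multiplicity_mul hq (FiniteMultiplicity.of_prime_left hq (mul_ne_zero hdx hdy)),
    ← WithTop.coe_add]
  congr 1
  push_cast
  ring

lemma le_valK_add {q : A} (hq : Prime q) (x y : K) :
    min (valK K q x) (valK K q y) ≤ valK K q (x + y) := by
  rcases eq_or_ne x 0 with rfl | hx
  · simpa [valK_zero] using min_le_right _ _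
  rcases eq_or_ne y 0 with rfl | hy
  · simpa [valK_zero] using min_le_left _ (valK K q x)
  rcases eq_or_ne (x + y) 0 with h0 | h0
  · rw [h0, valK_zero]; exact le_top
  have hnx : IsFractionRing.num A x ≠ 0 := fun h => hx (IsFractionRing.eq_zero_of_num_eq_zero h)
  have hdx : (IsFractionRing.den A x : A) ≠ 0 := nonZeroDivisors.coe_ne_zero _
  have hny : IsFractionRing.num A y ≠ 0 := fun h => hy (IsFractionRing.eq_zero_of_num_eq_zero h)
  have hdy : (IsFractionRing.den A y : A) ≠ 0 := nonZeroDivisors.coe_ne_zero _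
  have hdx' : algebraMap A K (IsFractionRing.den A x : A) ≠ 0 :=
    fun h => hdx (IsFractionRing.injective A K (h.trans (map_zero _).symm))
  have hdy' : algebraMap A K (IsFractionRing.den A y : A) ≠ 0 :=
    fun h => hdy (IsFractionRing.injective A K (h.trans (map_zero _).symm))
  set s : A := IsFractionRing.num A x * IsFractionRing.den A y +
      IsFractionRing.num A y * IsFractionRing.den A x with hs
  have hsum : x + y = algebraMap A K s /
      algebraMap A K ((IsFractionRing.den A x : A) * (IsFractionRing.den A y : A)) := by
    rw [hs, map_add, map_mul, map_mul, map_mul]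
    conv_lhs => rw [← IsFractionRing.mk'_num_den' A x, ← IsFractionRing.mk'_num_den' A y]
    rw [div_add_div _ _ hdx' hdy']
    ring_nf
  have hs0 : s ≠ 0 := by
    intro h
    apply h0
    rw [hsum, h, map_zero, zero_div]
  -- ℕ facts
  have fnd : FiniteMultiplicity q (IsFractionRing.num A x * IsFractionRing.den A y) :=
    FiniteMultiplicity.of_prime_left hq (mul_ne_zero hnx hdy)
  have fnd' : FiniteMultiplicity q (IsFractionRing.num A y * IsFractionRing.den A x) :=
    FiniteMultiplicity.of_prime_left hq (mul_ne_zero hny hdx)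
  have fs : FiniteMultiplicity q s := FiniteMultiplicity.of_prime_left hq hs0
  have hmin : min (multiplicity q (IsFractionRing.num A x * IsFractionRing.den A y))
      (multiplicity q (IsFractionRing.num A y * IsFractionRing.den A x)) ≤ multiplicity q s := by
    have h := min_le_emultiplicity_add (p := q)
      (a := IsFractionRing.num A x * IsFractionRing.den A y)
      (b := IsFractionRing.num A y * IsFractionRing.den A x)
    rw [fnd.emultiplicity_eq_multiplicity, fnd'.emultiplicity_eq_multiplicity, ← hs,
      fs.emultiplicity_eq_multiplicity] at h
    rcases inf_le_iff.mp h with h' | h'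
    · exact min_le_iff.mpr (Or.inl (by exact_mod_cast h'))
    · exact min_le_iff.mpr (Or.inr (by exact_mod_cast h'))
  rw [multiplicity_mul hq fnd, multiplicity_mul hq fnd'] at hmin
  have e1 : valK K q x = (((multiplicity q (IsFractionRing.num A x) : ℤ) -
      (multiplicity q (IsFractionRing.den A x : A) : ℤ) : ℤ) : WithTop ℤ) := by
    rw [valK, if_neg hx]
  have e2 : valK K q y = (((multiplicity q (IsFractionRing.num A y) : ℤ) -
      (multiplicity q (IsFractionRing.den A y : A) : ℤ) : ℤ) : WithTop ℤ) := by
    rw [valK, if_neg hy]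
  rw [hsum, valK_of_frac K hq hs0 (mul_ne_zero hdx hdy), e1, e2,
    multiplicity_mul hq (FiniteMultiplicity.of_prime_left hq (mul_ne_zero hdx hdy)),
    ← WithTop.coe_min, WithTop.coe_le_coe]
  omega

lemma valK_map (τ : A ≃+* A) (σ : K ≃+* K)
    (hσ : ∀ a : A, σ (algebraMap A K a) = algebraMap A K (τ a))
    {q : A} (hq : Prime q) (x : K) : valK K (τ q) (σ x) = valK K q x := by
  rcases eq_or_ne x 0 with rfl | hx
  · rw [map_zero, valK_zero, valK_zero]
  have hτq : Prime (τ q) := (MulEquiv.prime_iff τ.toMulEquiv).mpr hq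
  have hnx : IsFractionRing.num A x ≠ 0 := fun h => hx (IsFractionRing.eq_zero_of_num_eq_zero h)
  have hdx : (IsFractionRing.den A x : A) ≠ 0 := nonZeroDivisors.coe_ne_zero _
  have hσx : σ x = algebraMap A K (τ (IsFractionRing.num A x)) /
      algebraMap A K (τ (IsFractionRing.den A x : A)) := by
    conv_lhs => rw [← IsFractionRing.mk'_num_den' A x]
    rw [map_div₀, hσ, hσ]
  have hτn : τ (IsFractionRing.num A x) ≠ 0 := fun h => hnx (by
    simpa using congrArg τ.symm (h.trans (map_zero τ).symm))
  have hτd : τ (IsFractionRing.den A x : A) ≠ 0 := fun h => hdx (by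
    simpa using congrArg τ.symm (h.trans (map_zero τ).symm))
  rw [hσx, valK_of_frac K hτq hτn hτd, valK, if_neg hx,
    multiplicity_map_eq (τ : A ≃+* A), multiplicity_map_eq (τ : A ≃+* A)]

lemma le_valK_sum {q : A} (hq : Prime q) {ι : Type*} (s : Finset ι) (g : ι → K) :
    (s.inf fun i => valK K q (g i)) ≤ valK K q (∑ i ∈ s, g i) := by
  classical
  induction s using Finset.induction with
  | empty => simp [valK_zero]
  | insert a t hni ih =>
    rw [Finset.sum_insert hni, Finset.inf_insert]
    calc valK K q (g a) ⊓ t.inf (fun i => valK K q (g i))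
        ≤ min (valK K q (g a)) (valK K q (∑ i ∈ t, g i)) :=
          min_le_min le_rfl ih
      _ ≤ _ := le_valK_add K hq _ _

lemma le_valVec_mulVec {q : A} (hq : Prime q) {m n : ℕ} (M : Matrix (Fin m) (Fin n) K)
    (Y : Fin n → K) :
    valMat K q M + valVec K q Y ≤ valVec K q (M.mulVec Y) := by
  apply Finset.le_inf
  intro i _
  have : M.mulVec Y i = ∑ j, M i j * Y j := by
    simp [Matrix.mulVec, dotProduct]
  rw [this]
  refine le_trans ?_ (le_valK_sum K hq Finset.univ (fun j => M i j * Y j))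
  apply Finset.le_inf
  intro j _
  rcases eq_or_ne (M i j) 0 with h | h
  · simp [h, valK_zero]
  rcases eq_or_ne (Y j) 0 with h2 | h2
  · simp [h2, valK_zero]
  rw [valK_mul K hq h h2]
  exact add_le_add (Finset.inf_le (Finset.mem_univ ((i, j) : Fin m × Fin n)))
    (Finset.inf_le (Finset.mem_univ j))

lemma valVec_map (τ : A ≃+* A) (σ : K ≃+* K)
    (hσ : ∀ a : A, σ (algebraMap A K a) = algebraMap A K (τ a))
    {q : A} (hq : Prime q) {n : ℕ} (Y : Fin n → K) :
    valVec K (τ q) (fun i => σ (Y i)) = valVec K q Y :=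
  Finset.inf_congr rfl (fun i _ => valK_map K τ σ hσ hq (Y i))

lemma tau_pow_prime (τ : A ≃+* A) {p : A} (hp : Prime p) (k : ℤ) : Prime ((τ ^ k) p) :=
  (MulEquiv.prime_iff (τ ^ k : A ≃+* A).toMulEquiv).mpr hp

lemma tau_assoc_inj (τ : A ≃+* A) {p : A} (hp0 : p ≠ 0) (hpD : p ∉ Dset τ) {k j : ℤ}
    (h : Associated ((τ ^ k) p) ((τ ^ j) p)) : k = j := by
  by_contra hne
  apply hpD
  refine ⟨hp0, k - j, sub_ne_zero.mpr hne, ?_⟩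
  have h2 := h.map ((τ ^ (-j)) : A ≃+* A)
  have e1 : (τ ^ (-j)) ((τ ^ k) p) = (τ ^ (k - j)) p := by
    have : (τ ^ (-j) * τ ^ k) p = (τ ^ (-j)) ((τ ^ k) p) := rfl
    rw [← this, ← zpow_add, neg_add_eq_sub]
  have e2 : (τ ^ (-j)) ((τ ^ j) p) = p := by
    have : (τ ^ (-j) * τ ^ j) p = (τ ^ (-j)) ((τ ^ j) p) := rfl
    rw [← this, ← zpow_add, neg_add_cancel, zpow_zero]
    rfl
  rwa [e1, e2] at h2

lemma finite_dvd_set (τ : A ≃+* A) {p : A} (hp : Prime p) (hpD : p ∉ Dset τ) {c : A}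
    (hc : c ≠ 0) : {k : ℤ | (τ ^ k) p ∣ c}.Finite := by
  classical
  letI : NormalizationMonoid A := UniqueFactorizationMonoid.strongNormalizationMonoid.toNormalizationMonoid
  set S := {k : ℤ | (τ ^ k) p ∣ c} with hS
  apply Set.Finite.of_finite_image (f := fun k => normalize ((τ ^ k) p))
  · apply Set.Finite.subset (UniqueFactorizationMonoid.normalizedFactors c).toFinset.finite_toSet
    rintro y ⟨k, hk, rfl⟩
    obtain ⟨q, hqmem, hqass⟩ := UniqueFactorizationMonoid.exists_mem_normalizedFactors_of_dvd hc
      (tau_pow_prime τ hp k).irreducible hk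
    have : normalize ((τ ^ k) p) = q := by
      rw [← UniqueFactorizationMonoid.normalize_normalized_factor q hqmem]
      exact normalize_eq_normalize hqass.dvd hqass.symm.dvd
    simp only []
    rw [this]
    exact Multiset.mem_toFinset.mpr hqmem
  · intro k _ j _ hkj
    exact tau_assoc_inj τ hp.ne_zero hpD
      (associated_of_dvd_dvd (normalize_eq_normalize_iff.mp hkj).1
        (normalize_eq_normalize_iff.mp hkj).2)

lemma finite_valK_ne_zero (τ : A ≃+* A) {p : A} (hp : Prime p) (hpD : p ∉ Dset τ) {x : K}
    (hx : x ≠ 0) : {k : ℤ | valK K ((τ ^ k) p) x ≠ 0}.Finite := by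
  have hnx : IsFractionRing.num A x ≠ 0 := fun h => hx (IsFractionRing.eq_zero_of_num_eq_zero h)
  have hdx : (IsFractionRing.den A x : A) ≠ 0 := nonZeroDivisors.coe_ne_zero _
  apply (finite_dvd_set τ hp hpD (mul_ne_zero hnx hdx)).subset
  intro k hk
  simp only [Set.mem_setOf_eq, valK, if_neg hx] at hk ⊢
  set q := (τ ^ k) p with hq
  have hne : multiplicity q (IsFractionRing.num A x) ≠ multiplicity q (IsFractionRing.den A x : A) := by
    intro h; apply hk; rw [h]; simp
  rcases Nat.lt_or_ge (multiplicity q (IsFractionRing.num A x))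
      (multiplicity q (IsFractionRing.den A x : A)) with hlt | hge
  · have : q ∣ (IsFractionRing.den A x : A) := by
      by_contra hndvd
      rw [multiplicity_eq_zero.mpr hndvd] at hlt
      omega
    exact this.mul_left _
  · have hpos : 0 < multiplicity q (IsFractionRing.num A x) := by omega
    have : q ∣ IsFractionRing.num A x := by
      by_contra hndvd
      rw [multiplicity_eq_zero.mpr hndvd] at hpos
      omega
    exact this.mul_right _

end Helpers

/-- Let `Y ∈ K^n` be a nonzero solution of `τ(Y) = M·Y` and `p ∉ D` a prime.
If the exponent functions `e₁` of `cont(M)` and `e₋₁` of `cont(M₋₁)` (where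
`M₋₁ = τ⁻¹(M⁻¹)`) have supports contained in `[ℓ₁, m₁]` and `[ℓ₋₁, m₋₁]` respectively,
then `v_{τ^k(p)}(Y) = 0` for all `k` outside `[min ℓ₁ (ℓ₋₁ + 1), max (m₁ − 1) m₋₁]`. -/
theorem support_lemma {A : Type*} [CommRing A] [IsDomain A] [UniqueFactorizationMonoid A]
    (K : Type*) [Field K] [Algebra A K] [IsFractionRing A K]
    (τ : A ≃+* A) (σ : K ≃+* K)
    (hσ : ∀ a : A, σ (algebraMap A K a) = algebraMap A K (τ a))
    {n : ℕ} (M : Matrix (Fin n) (Fin n) K) (hM : IsUnit M.det)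
    (p : A) (hp : Prime p) (hpD : p ∉ Dset τ)
    (c1 cneg1 : K) (hc1 : c1 ≠ 0) (hcneg1 : cneg1 ≠ 0)
    (hcont1 : ∀ q : A, Prime q → valK K q c1 = valMat K q M)
    (hcontneg1 : ∀ q : A, Prime q → valK K q cneg1 = valMat K q ((M⁻¹).map ⇑σ.symm))
    (l1 m1 lneg mneg : ℤ)
    (hsupp1 : ∀ k : ℤ, k ∉ Set.Icc l1 m1 → valK K ((τ ^ k) p) c1 = 0)
    (hsuppneg : ∀ k : ℤ, k ∉ Set.Icc lneg mneg → valK K ((τ ^ k) p) cneg1 = 0)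
    (Y : Fin n → K) (hY0 : Y ≠ 0)
    (hY : (fun i => σ (Y i)) = M.mulVec Y) :
    ∀ k : ℤ, k ∉ Set.Icc (min l1 (lneg + 1)) (max (m1 - 1) mneg) →
      valVec K ((τ ^ k) p) Y = 0 := by
  classical
  set f : ℤ → WithTop ℤ := fun k => valVec K ((τ ^ k) p) Y with hf
  have hprime : ∀ k : ℤ, Prime ((τ ^ k) p) := tau_pow_prime τ hp
  have hstep : ∀ k : ℤ, (τ ^ (k + 1)) p = τ ((τ ^ k) p) := by
    intro k
    have h : (τ * τ ^ k) p = τ ((τ ^ k) p) := rfl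
    rw [← h, add_comm k 1, zpow_add, zpow_one]
  have R1 : ∀ k : ℤ, valK K ((τ ^ (k + 1)) p) c1 + f (k + 1) ≤ f k := by
    intro k
    have h1 : f k = valVec K ((τ ^ (k + 1)) p) (fun i => σ (Y i)) := by
      rw [hstep k]
      exact (valVec_map K τ σ hσ (hprime k) Y).symm
    rw [h1, hY, hcont1 _ (hprime (k + 1))]
    exact le_valVec_mulVec K (hprime (k + 1)) M Y
  have hMY : M⁻¹.mulVec (fun i => σ (Y i)) = Y := by
    rw [hY, Matrix.mulVec_mulVec, Matrix.nonsing_inv_mul M hM, Matrix.one_mulVec]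
  have hNY : (fun i => σ.symm (Y i)) = ((M⁻¹).map ⇑σ.symm).mulVec Y := by
    funext i
    have h : Y i = (M⁻¹.mulVec (fun i => σ (Y i))) i := by rw [hMY]
    rw [h]
    simp [Matrix.mulVec, dotProduct, map_sum, map_mul, Matrix.map_apply]
  have R2 : ∀ k : ℤ, valK K ((τ ^ k) p) cneg1 + f k ≤ f (k + 1) := by
    intro k
    have h1 : f (k + 1) = valVec K ((τ ^ k) p) (fun i => σ.symm (Y i)) := by
      have h2 := valVec_map K τ σ hσ (hprime k) (fun i => σ.symm (Y i))
      have h3 : (fun i => σ (σ.symm (Y i))) = Y := by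
        funext i; rw [σ.apply_symm_apply]
      rw [h3] at h2
      show valVec K ((τ ^ (k + 1)) p) Y = _
      rw [hstep k, h2]
    rw [h1, hNY, hcontneg1 _ (hprime k)]
    exact le_valVec_mulVec K (hprime k) _ Y
  -- finite support of f
  obtain ⟨i₀, hi₀⟩ : ∃ i, Y i ≠ 0 := by
    by_contra h
    push_neg at h
    exact hY0 (funext h)
  have hSfin : (⋃ i : Fin n, {k : ℤ | Y i ≠ 0 ∧ valK K ((τ ^ k) p) (Y i) ≠ 0}).Finite := by
    apply Set.finite_iUnion
    intro i
    rcases eq_or_ne (Y i) 0 with h | h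
    · convert Set.finite_empty
      ext k; simp [h]
    · exact (finite_valK_ne_zero K τ hp hpD h).subset (fun k hk => hk.2)
  set S := ⋃ i : Fin n, {k : ℤ | Y i ≠ 0 ∧ valK K ((τ ^ k) p) (Y i) ≠ 0} with hSdef
  have hzero : ∀ k : ℤ, k ∉ S → f k = 0 := by
    intro k hk
    have hall : ∀ i : Fin n, Y i ≠ 0 → valK K ((τ ^ k) p) (Y i) = 0 := by
      intro i hi
      by_contra hv
      exact hk (Set.mem_iUnion.mpr ⟨i, hi, hv⟩)
    apply le_antisymm
    · calc f k ≤ valK K ((τ ^ k) p) (Y i₀) := Finset.inf_le (Finset.mem_univ i₀)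
        _ = 0 := hall i₀ hi₀
    · apply Finset.le_inf
      intro i _
      rcases eq_or_ne (Y i) 0 with h | h
      · rw [h, valK_zero]; exact le_top
      · rw [hall i h]
  obtain ⟨ub, hub⟩ : BddAbove S := hSfin.bddAbove
  obtain ⟨lb, hlb⟩ : BddBelow S := hSfin.bddBelow
  have houter : ∀ k : ℤ, k < lb ∨ ub < k → f k = 0 := by
    intro k hk
    apply hzero
    intro hmem
    rcases hk with h | h
    · exact absurd (hlb hmem) (by omega)
    · exact absurd (hub hmem) (by omega)
  have hup : ∀ k : ℤ, max (m1 - 1) mneg < k → f k = f (k + 1) := by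
    intro k hk
    have e1 : valK K ((τ ^ (k + 1)) p) c1 = 0 :=
      hsupp1 (k + 1) (by simp only [Set.mem_Icc, not_and_or, not_le]; omega)
    have e2 : valK K ((τ ^ k) p) cneg1 = 0 :=
      hsuppneg k (by simp only [Set.mem_Icc, not_and_or, not_le]; omega)
    have h1 := R1 k; rw [e1, zero_add] at h1
    have h2 := R2 k; rw [e2, zero_add] at h2
    exact le_antisymm h2 h1
  have hdown : ∀ k : ℤ, k < min l1 (lneg + 1) → f k = f (k - 1) := by
    intro k hk
    have e1 : valK K ((τ ^ (k - 1 + 1)) p) c1 = 0 := by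
      rw [sub_add_cancel]
      exact hsupp1 k (by simp only [Set.mem_Icc, not_and_or, not_le]; omega)
    have e2 : valK K ((τ ^ (k - 1)) p) cneg1 = 0 :=
      hsuppneg (k - 1) (by simp only [Set.mem_Icc, not_and_or, not_le]; omega)
    have h1 := R1 (k - 1); rw [e1, zero_add, sub_add_cancel] at h1
    have h2 := R2 (k - 1); rw [e2, zero_add, sub_add_cancel] at h2
    exact le_antisymm h1 h2
  have hupI : ∀ (j : ℕ) (k : ℤ), max (m1 - 1) mneg < k → f k = f (k + j) := by
    intro j
    induction j with
    | zero => intro k _; norm_num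
    | succ j ih =>
      intro k hk
      have e : k + ((j + 1 : ℕ) : ℤ) = k + 1 + (j : ℤ) := by push_cast; ring
      rw [hup k hk, ih (k + 1) (by omega), e]
  have hdownI : ∀ (j : ℕ) (k : ℤ), k < min l1 (lneg + 1) → f k = f (k - j) := by
    intro j
    induction j with
    | zero => intro k _; norm_num
    | succ j ih =>
      intro k hk
      have e : k - ((j + 1 : ℕ) : ℤ) = k - 1 - (j : ℤ) := by push_cast; ring
      rw [hdown k hk, ih (k - 1) (by omega), e]
  intro k hk
  simp only [Set.mem_Icc, not_and_or, not_le] at hk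
  show f k = 0
  rcases hk with hk | hk
  · rw [hdownI (k - lb + 1).toNat k hk]
    apply houter
    left
    omega
  · rw [hupI (ub - k + 1).toNat k hk]
    apply houter
    right
    omega
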